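/- arXiv:2310.02176 — 3 statements merged into one kernel-verified Lean document; each statement's English description precedes it below -/
import Mathlib

section
/- Let θ and A be real 2×2 matrices with Aθ = θA, and let ξ ∈ ℝ². For each s ∈ ℝ define φ_s : ℝ × ℝ² → ℝ × ℝ² by φ_s(t, v) = (t, e^{sA} v + Λ^θ_t (Λ^A_s ξ)). Then for every s ∈ ℝ and all (t₁, v₁), (t₂, v₂) ∈ ℝ × ℝ², one has φ_s((t₁, v₁) · (t₂, v₂)) = φ_s(t₁, v₁) · φ_s(t₂, v₂), i.e., each φ_s is a group endomorphism of G(θ). -/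
open Matrix

/-- `Λ^B_t v := ∫₀ᵗ e^{sB} v ds`. -/
noncomputable def Lam (B : Matrix (Fin 2) (Fin 2) ℝ) (t : ℝ) (v : Fin 2 → ℝ) : Fin 2 → ℝ :=
  ∫ s in (0:ℝ)..t, (NormedSpace.exp (s • B)) *ᵥ v

/-- The product of the group `G(θ) = ℝ ×_ρ ℝ²`:
`(t₁, v₁) · (t₂, v₂) = (t₁ + t₂, v₁ + e^{t₁θ} v₂)`. -/
noncomputable def Gmul (θ : Matrix (Fin 2) (Fin 2) ℝ) (p q : ℝ × (Fin 2 → ℝ)) :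
    ℝ × (Fin 2 → ℝ) :=
  (p.1 + q.1, p.2 + (NormedSpace.exp (p.1 • θ)) *ᵥ q.2)

/-!
Since `A` commutes with `θ`, `e^{sA}` commutes with `e^{tθ}`, so the linear part `v ↦ e^{sA} v`
is an endomorphism of `G(θ)`. The translation part `t ↦ Λ^θ_t w` is a crossed homomorphism
(cocycle) for the action `t ↦ e^{tθ}`: `Λ^θ_{t₁+t₂} w = Λ^θ_{t₁} w + e^{t₁θ} Λ^θ_{t₂} w`,
which follows from the substitution `r ↦ t₁ + r` in the integral.
-/

namespace Matrix

variable {n : Type*} [Fintype n]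

theorem intervalIntegral_mulVec (M : Matrix n n ℝ) {f : ℝ → n → ℝ} {a b : ℝ}
    (hf : IntervalIntegrable f MeasureTheory.volume a b) :
    ∫ r in a..b, M *ᵥ f r = M *ᵥ ∫ r in a..b, f r :=
  (LinearMap.toContinuousLinearMap (M.mulVecLin)).intervalIntegral_comp_comm hf

variable [DecidableEq n]

theorem continuous_exp_smul_mulVec (B : Matrix n n ℝ) (v : n → ℝ) :
    Continuous fun r : ℝ => NormedSpace.exp (r • B) *ᵥ v := by
  open scoped Norms.Operator in fun_prop

theorem exp_add_smul (a b : ℝ) (B : Matrix n n ℝ) :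
    NormedSpace.exp ((a + b) • B) = NormedSpace.exp (a • B) * NormedSpace.exp (b • B) := by
  rw [add_smul]
  exact Matrix.exp_add_of_commute _ _ (((Commute.refl B).smul_left a).smul_right b)

end Matrix

theorem Lam_add (θ : Matrix (Fin 2) (Fin 2) ℝ) (t₁ t₂ : ℝ) (w : Fin 2 → ℝ) :
    Lam θ (t₁ + t₂) w = Lam θ t₁ w + NormedSpace.exp (t₁ • θ) *ᵥ Lam θ t₂ w := by
  have hint (a b : ℝ) :
      IntervalIntegrable (fun r => NormedSpace.exp (r • θ) *ᵥ w) MeasureTheory.volume a b :=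
    (continuous_exp_smul_mulVec θ w).intervalIntegrable a b
  have hshift : ∫ r in t₁..t₁ + t₂, NormedSpace.exp (r • θ) *ᵥ w =
      NormedSpace.exp (t₁ • θ) *ᵥ Lam θ t₂ w := by
    rw [Lam, ← intervalIntegral_mulVec _ (hint 0 t₂)]
    simp_rw [mulVec_mulVec, ← exp_add_smul]
    rw [intervalIntegral.integral_comp_add_left (fun r => NormedSpace.exp (r • θ) *ᵥ w), add_zero]
  rw [Lam, ← intervalIntegral.integral_add_adjacent_intervals (hint 0 t₁) (hint t₁ (t₁ + t₂)),
    hshift]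
  rfl

/-- For `A` commuting with `θ` and `ξ ∈ ℝ²`, each map
`φ_s(t, v) = (t, e^{sA} v + Λ^θ_t (Λ^A_s ξ))` is a group endomorphism of `G(θ)`. -/
theorem phi_is_endomorphism (θ A : Matrix (Fin 2) (Fin 2) ℝ) (hcomm : A * θ = θ * A)
    (ξ : Fin 2 → ℝ) (φ : ℝ → ℝ × (Fin 2 → ℝ) → ℝ × (Fin 2 → ℝ))
    (hφ : ∀ s t v, φ s (t, v) = (t, (NormedSpace.exp (s • A)) *ᵥ v + Lam θ t (Lam A s ξ))) :
    ∀ (s : ℝ) (p q : ℝ × (Fin 2 → ℝ)), φ s (Gmul θ p q) = Gmul θ (φ s p) (φ s q) := by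
  rintro s ⟨t₁, v₁⟩ ⟨t₂, v₂⟩
  have hexp : NormedSpace.exp (s • A) * NormedSpace.exp (t₁ • θ) =
      NormedSpace.exp (t₁ • θ) * NormedSpace.exp (s • A) :=
    (((show Commute A θ from hcomm).smul_right t₁).smul_left s).exp
  simp only [Gmul, hφ, Prod.mk.injEq, true_and]
  rw [Lam_add, mulVec_add, mulVec_mulVec, hexp, ← mulVec_mulVec, mulVec_add]
  abel
end

section
/- Let A and θ be real 2×2 matrices with Aθ = θA, and let η ∈ ℝ² be such that NOT both ⟨Aη, Rη⟩ = 0 and ⟨θη, Rη⟩ = 0 hold (i.e., η is not a common eigenvector of A and θ). If u₀ ∈ ℝ satisfies ⟨(A − u₀θ)η, Rη⟩ = 0, then A − u₀θ is a scalar matrix: there exists λ ∈ ℝ with A − u₀θ = λ·I. -/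
/-!
`⟨v, Rη⟩` is the determinant of the pair `(η, v)`. So `⟨Bη, Rη⟩ = 0` says that `η` is an
eigenvector of `B := A − u₀θ`, say `Bη = λη`, while `⟨θη, Rη⟩ ≠ 0` (forced by the hypotheses) says
that `η, θη` is a basis of `ℝ²`. As `B` commutes with `θ`, also `B(θη) = θ(Bη) = λ θη`, so `B`
acts as `λ` on a basis.
-/

open Matrix

/-- The counterclockwise rotation by `π/2` on `ℝ²`. -/
def Rot : Matrix (Fin 2) (Fin 2) ℝ := !![0, -1; 1, 0]

theorem dotProduct_rot_mulVec (v w : Fin 2 → ℝ) :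
    v ⬝ᵥ (Rot *ᵥ w) = v 1 * w 0 - v 0 * w 1 := by
  simp only [dotProduct, mulVec, Rot, of_apply, cons_val', cons_val_fin_one, Fin.sum_univ_two,
    cons_val_zero, cons_val_one]
  ring

theorem exists_eq_smul_of_dotProduct_rot_mulVec_eq_zero {v η : Fin 2 → ℝ} (hη : η ≠ 0)
    (h : v ⬝ᵥ (Rot *ᵥ η) = 0) : ∃ c : ℝ, v = c • η := by
  rw [dotProduct_rot_mulVec] at h
  by_cases h0 : η 0 = 0
  · have h1 : η 1 ≠ 0 := fun h1 => hη (funext (Fin.forall_fin_two.mpr ⟨h0, h1⟩))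
    refine ⟨v 1 / η 1, funext (Fin.forall_fin_two.mpr ⟨?_, ?_⟩)⟩
    · simp only [Pi.smul_apply, smul_eq_mul, h0] at h ⊢
      field_simp
      linarith
    · simp [h1]
  · refine ⟨v 0 / η 0, funext (Fin.forall_fin_two.mpr ⟨?_, ?_⟩)⟩
    · simp [h0]
    · simp only [Pi.smul_apply, smul_eq_mul]
      field_simp
      linarith

theorem eq_zero_of_mulVec_eq_zero_of_dotProduct_rot_mulVec_ne_zero {M : Matrix (Fin 2) (Fin 2) ℝ}
    {η w : Fin 2 → ℝ} (hη : M *ᵥ η = 0) (hw : M *ᵥ w = 0) (h : w ⬝ᵥ (Rot *ᵥ η) ≠ 0) : M = 0 := by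
  rw [dotProduct_rot_mulVec] at h
  ext i j
  have hiη : M i 0 * η 0 + M i 1 * η 1 = 0 := by
    simpa [mulVec, dotProduct, Fin.sum_univ_two] using congrFun hη i
  have hiw : M i 0 * w 0 + M i 1 * w 1 = 0 := by
    simpa [mulVec, dotProduct, Fin.sum_univ_two] using congrFun hw i
  have key : ∀ j, M i j * (w 1 * η 0 - w 0 * η 1) = 0 := Fin.forall_fin_two.mpr
    ⟨by linear_combination w 1 * hiη - η 1 * hiw, by linear_combination η 0 * hiw - w 0 * hiη⟩
  simpa [h] using key j

/-- If `Aθ = θA`, `η` is not a common eigenvector of `A` and `θ`, and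
`⟨(A − u₀θ)η, Rη⟩ = 0`, then `A − u₀θ` is a scalar matrix. -/
theorem scalar_matrix_of_eigenvector (A θ : Matrix (Fin 2) (Fin 2) ℝ)
    (hcomm : A * θ = θ * A) (η : Fin 2 → ℝ)
    (hη : ¬((A *ᵥ η) ⬝ᵥ (Rot *ᵥ η) = 0 ∧ (θ *ᵥ η) ⬝ᵥ (Rot *ᵥ η) = 0))
    (u₀ : ℝ) (h₀ : ((A - u₀ • θ) *ᵥ η) ⬝ᵥ (Rot *ᵥ η) = 0) :
    ∃ lam : ℝ, A - u₀ • θ = lam • (1 : Matrix (Fin 2) (Fin 2) ℝ) := by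
  set B := A - u₀ • θ
  have hθη : (θ *ᵥ η) ⬝ᵥ (Rot *ᵥ η) ≠ 0 := by
    intro hθη
    refine hη ⟨?_, hθη⟩
    rwa [sub_mulVec, sub_dotProduct, smul_mulVec, smul_dotProduct, hθη, smul_zero,
      sub_zero] at h₀
  have hη0 : η ≠ 0 := by
    rintro rfl
    simp at hθη
  obtain ⟨lam, hlam⟩ := exists_eq_smul_of_dotProduct_rot_mulVec_eq_zero hη0 h₀
  refine ⟨lam, sub_eq_zero.mp
    (eq_zero_of_mulVec_eq_zero_of_dotProduct_rot_mulVec_ne_zero (w := θ *ᵥ η) ?_ ?_ hθη)⟩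
  · rw [sub_mulVec, hlam, smul_mulVec, one_mulVec, sub_self]
  · have hcommB : Commute (B - lam • 1) θ :=
      (Commute.sub_left hcomm ((Commute.refl θ).smul_left u₀)).sub_left
        ((Commute.one_left θ).smul_left lam)
    rw [mulVec_mulVec, hcommB.eq, ← mulVec_mulVec, sub_mulVec, hlam, smul_mulVec, one_mulVec,
      sub_self, mulVec_zero]
end

section
/- Let γ ∈ ℝ and θ = γI + R, where I is the 2×2 identity matrix and R is the counterclockwise rotation by π/2. Then θ is invertible and for every ξ ∈ ℝ² and t ∈ ℝ, ⟨Λ^θ_t ξ, R θ⁻¹ ξ⟩ = ‖θ⁻¹ξ‖² e^{γt} sin t. -/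
open Matrix

/-!
Writing `ξ = θ w`, the integrand `exp (s • θ) *ᵥ θ w` is the derivative of `s ↦ exp (s • θ) *ᵥ w`,
so `Λ^θ_t ξ = exp (t • θ) *ᵥ w - w`. As `R² = -1`, `R` plays the role of `i`, whence
`exp (t • θ) = e^{γt} (cos t • 1 + sin t • R)`. Finally `R` is skew and orthogonal, so pairing with
`R w` kills every term except `e^{γt} sin t ‖w‖²`.
-/

open NormedSpace

theorem Matrix.exp_smul_one_add_smul_of_mul_self_eq_neg_one {n : Type*} [Fintype n]
    [DecidableEq n] {J : Matrix n n ℝ} (hJ : J * J = -1) (x y : ℝ) :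
    exp (x • 1 + y • J) = Real.exp x • (Real.cos y • 1 + Real.sin y • J) := by
  -- `Complex.liftAux J` sends `i ↦ J`; any norm serves to commute it with `exp`.
  open scoped Matrix.Norms.Operator in
  let φ := Complex.liftAux J hJ
  have hφ : ∀ z : ℂ, φ z = z.re • 1 + z.im • J := fun z => by
    rw [Complex.liftAux_apply, Algebra.algebraMap_eq_smul_one]
  have hφc : Continuous φ := φ.toLinearMap.continuous_of_finiteDimensional
  have := map_exp φ hφc ⟨x, y⟩
  rw [hφ, ← Complex.exp_eq_exp_ℂ, hφ, Complex.exp_re, Complex.exp_im] at this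
  rw [smul_add, smul_smul, smul_smul]
  exact this.symm

theorem Matrix.hasDerivAt_exp_smul_mulVec {n : Type*} [Fintype n] [DecidableEq n] (B : Matrix n n ℝ)
    (w : n → ℝ) (t : ℝ) :
    HasDerivAt (fun s : ℝ => exp (s • B) *ᵥ w) (exp (t • B) *ᵥ (B *ᵥ w)) t := by
  open scoped Matrix.Norms.Operator in
  let L : Matrix n n ℝ →L[ℝ] n → ℝ :=
    LinearMap.toContinuousLinearMap
      { toFun := fun M => M *ᵥ w, map_add' := fun M N => add_mulVec M N w,
        map_smul' := fun c M => smul_mulVec c M w }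
  rw [mulVec_mulVec]
  exact L.hasFDerivAt.comp_hasDerivAt t (hasDerivAt_exp_smul_const B t)

theorem lam_mulVec (B : Matrix (Fin 2) (Fin 2) ℝ) (t : ℝ) (w : Fin 2 → ℝ) :
    Lam B t (B *ᵥ w) = exp (t • B) *ᵥ w - w := by
  have hcont : Continuous fun s : ℝ => exp (s • B) *ᵥ (B *ᵥ w) :=
    continuous_iff_continuousAt.2 fun s => (hasDerivAt_exp_smul_mulVec B (B *ᵥ w) s).continuousAt
  rw [Lam, intervalIntegral.integral_eq_sub_of_hasDerivAt
    (fun s _ => hasDerivAt_exp_smul_mulVec B w s) (hcont.intervalIntegrable 0 t)]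
  simp

theorem rot_mul_rot : Rot * Rot = -1 := by
  simp [Rot, ← Matrix.ext_iff, Fin.forall_fin_two]

theorem det_smul_one_add_rot (γ : ℝ) : (γ • 1 + Rot).det = γ ^ 2 + 1 := by
  simp [Rot, det_fin_two]; ring

theorem dotProduct_rot_mulVec_self (w : Fin 2 → ℝ) : w ⬝ᵥ (Rot *ᵥ w) = 0 := by
  simp [Rot, dotProduct, Fin.sum_univ_two, mulVec]; ring

theorem rot_mulVec_dotProduct_rot_mulVec (v w : Fin 2 → ℝ) :
    (Rot *ᵥ v) ⬝ᵥ (Rot *ᵥ w) = v ⬝ᵥ w := by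
  simp [Rot, dotProduct, Fin.sum_univ_two, mulVec]; ring

theorem exp_smul_smul_one_add_rot (γ s : ℝ) :
    exp (s • (γ • 1 + Rot)) = Real.exp (γ * s) • (Real.cos s • 1 + Real.sin s • Rot) := by
  rw [smul_add, smul_smul, mul_comm, exp_smul_one_add_smul_of_mul_self_eq_neg_one rot_mul_rot]

/-- For `θ = γI + R`, the matrix `θ` is invertible, and
`⟨Λ^θ_t ξ, Rθ⁻¹ξ⟩ = ‖θ⁻¹ξ‖² e^{γt} sin t` for all `ξ` and `t`, where
`‖w‖² = w ⬝ᵥ w` is the squared Euclidean norm. -/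
theorem lam_pairing_gammaI_add_rot (γ : ℝ) (θ : Matrix (Fin 2) (Fin 2) ℝ)
    (hθ : θ = γ • (1 : Matrix (Fin 2) (Fin 2) ℝ) + Rot) :
    IsUnit θ ∧ ∀ (ξ : Fin 2 → ℝ) (t : ℝ),
      (Lam θ t ξ) ⬝ᵥ (Rot *ᵥ (θ⁻¹ *ᵥ ξ)) =
        ((θ⁻¹ *ᵥ ξ) ⬝ᵥ (θ⁻¹ *ᵥ ξ)) * (Real.exp (γ * t) * Real.sin t) := by
  have hdet : IsUnit θ.det := by
    rw [hθ, det_smul_one_add_rot]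
    exact (by positivity : γ ^ 2 + 1 ≠ 0).isUnit
  refine ⟨(isUnit_iff_isUnit_det θ).2 hdet, fun ξ t => ?_⟩
  set w := θ⁻¹ *ᵥ ξ
  have hξ : ξ = θ *ᵥ w := by rw [mulVec_mulVec, mul_nonsing_inv θ hdet, one_mulVec]
  rw [hξ, lam_mulVec, hθ, exp_smul_smul_one_add_rot]
  simp only [smul_mulVec, add_mulVec, one_mulVec, sub_dotProduct, smul_dotProduct, add_dotProduct,
    dotProduct_rot_mulVec_self, rot_mulVec_dotProduct_rot_mulVec, smul_eq_mul]
  ring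
end
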